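/- Let u be a function on a finite weighted tree and ũ its piecewise-linear extension to the metric tree. Then u has exactly n strong sign graphs (maximal connected vertex sets of constant strict sign) if and only if ũ has exactly n nodal domains (maximal connected subsets of the metric tree of constant strict sign); the correspondence sends each strong sign graph G to the unique nodal domain containing G. -/

import Mathlib

open scoped Classical
open Finset

/-- A finite weighted graph: positive symmetric weights on edges, zero off edges. -/
structure WeightedGraph (V : Type) [Fintype V] [DecidableEq V] where
  G : SimpleGraph V
  c : V → V → ℝ
  symm : ∀ x y, c x y = c y x
  pos : ∀ x y, G.Adj x y → 0 < c x y
  not_adj : ∀ x y, ¬ G.Adj x y → c x y = 0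

variable {V : Type} [Fintype V] [DecidableEq V]

/-- The weighted Laplacian `(L f)(x) = ∑_{y∼x} c(x,y) (f x - f y)`. -/
noncomputable def lap (W : WeightedGraph V) (f : V → ℝ) (x : V) : ℝ :=
  ∑ y, if W.G.Adj x y then W.c x y * (f x - f y) else 0

/-- The Schrödinger operator `A = L + r`. -/
noncomputable def schrod (W : WeightedGraph V) (r : V → ℝ) (f : V → ℝ) (x : V) : ℝ :=
  lap W f x + r x * f x

/-- `u` is a (nonzero) eigenvector of `A = L + r` with eigenvalue `μ`. -/
def IsEigenpair (W : WeightedGraph V) (r : V → ℝ) (μ : ℝ) (u : V → ℝ) : Prop :=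
  u ≠ 0 ∧ ∀ x, schrod W r u x = μ * u x

/-- A strong positive sign graph of `u`: a maximal connected vertex set on which `u > 0`. -/
def IsPosSignGraph (G : SimpleGraph V) (u : V → ℝ) (S : Set V) : Prop :=
  (G.induce S).Connected ∧ (∀ x ∈ S, 0 < u x) ∧
    ∀ T : Set V, S ⊆ T → (G.induce T).Connected → (∀ x ∈ T, 0 < u x) → T = S

/-- A strong negative sign graph of `u`: a maximal connected vertex set on which `u < 0`. -/
def IsNegSignGraph (G : SimpleGraph V) (u : V → ℝ) (S : Set V) : Prop :=
  (G.induce S).Connected ∧ (∀ x ∈ S, u x < 0) ∧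
    ∀ T : Set V, S ⊆ T → (G.induce T).Connected → (∀ x ∈ T, u x < 0) → T = S

/-- A strong sign graph of `u`. -/
def IsSignGraph (G : SimpleGraph V) (u : V → ℝ) (S : Set V) : Prop :=
  IsPosSignGraph G u S ∨ IsNegSignGraph G u S

/-- The number of strong sign graphs of `u`. -/
noncomputable def signGraphCount (G : SimpleGraph V) (u : V → ℝ) : ℕ :=
  Nat.card {S : Set V // IsSignGraph G u S}

/-- The length of the edge `(x,y)`: `l(x,y) = 1/c(x,y)`. -/
noncomputable def elen (W : WeightedGraph V) (x y : V) : ℝ := 1 / W.c x y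

/-- Disjoint union of the (closed) edge intervals together with the vertices. -/
abbrev EdgeSpace (W : WeightedGraph V) : Type :=
  (Σ e : {p : V × V // W.G.Adj p.1 p.2}, ↥(Set.Icc (0:ℝ) (elen W e.1.1 e.1.2))) ⊕ V

/-- Canonical description of a point of the metric tree: either a vertex, or an interior
edge point recorded as the unordered pair of (endpoint, distance to that endpoint). -/
noncomputable def descr (W : WeightedGraph V) : EdgeSpace W → V ⊕ Sym2 (V × ℝ)
  | Sum.inr x => Sum.inl x
  | Sum.inl ⟨e, t⟩ =>
      if (t : ℝ) = 0 then Sum.inl e.1.1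
      else if (t : ℝ) = elen W e.1.1 e.1.2 then Sum.inl e.1.2
      else Sum.inr (Sym2.mk (e.1.1, (t : ℝ)) (e.1.2, elen W e.1.1 e.1.2 - (t : ℝ)))

/-- The metric tree: the set of canonical descriptions of points, i.e. the geometric
realization of the weighted graph with edge `(x,y)` identified with `[0, l(x,y)]`. -/
abbrev MT (W : WeightedGraph V) : Type := ↥(Set.range (descr W))

/-- Quotient (gluing) topology on the metric tree. -/
noncomputable instance (W : WeightedGraph V) : TopologicalSpace (MT W) :=
  letI : TopologicalSpace V := ⊥
  TopologicalSpace.coinduced (fun p => (⟨descr W p, ⟨p, rfl⟩⟩ : MT W)) inferInstance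

/-- Value of the piecewise-linear extension of `u` at a described point. -/
noncomputable def lineVal (u : V → ℝ) : V ⊕ Sym2 (V × ℝ) → ℝ
  | Sum.inl x => u x
  | Sum.inr s => Sym2.lift ⟨fun a b => (b.2 * u a.1 + a.2 * u b.1) / (a.2 + b.2),
      fun a b => by dsimp only; ring_nf⟩ s

/-- The piecewise-linear extension `ũ` of `u : V → ℝ` to the metric tree. -/
noncomputable def uext (W : WeightedGraph V) (u : V → ℝ) (p : MT W) : ℝ := lineVal u p.1

/-- The embedding of a vertex into the metric tree. -/
def vtx (W : WeightedGraph V) (x : V) : MT W := ⟨Sum.inl x, ⟨Sum.inr x, rfl⟩⟩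

/-- A nodal domain of `ũ`: a maximal connected subset of the metric tree on which
`ũ` has constant strict sign. -/
def IsNodalDomain (W : WeightedGraph V) (u : V → ℝ) (D : Set (MT W)) : Prop :=
  D.Nonempty ∧ IsPreconnected D ∧
    ((∀ p ∈ D, 0 < uext W u p) ∨ (∀ p ∈ D, uext W u p < 0)) ∧
    ∀ D' : Set (MT W), D ⊆ D' → IsPreconnected D' →
      ((∀ p ∈ D', 0 < uext W u p) ∨ (∀ p ∈ D', uext W u p < 0)) → D' = D

/-- Number of nodal domains of `ũ`. -/
noncomputable def nodalCount (W : WeightedGraph V) (u : V → ℝ) : ℕ :=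
  Nat.card {D : Set (MT W) // IsNodalDomain W u D}

/-- A zero of `ũ`, counted as a maximal connected subset of the metric tree on which
`ũ` vanishes (so a maximal zero subgraph counts as a single zero). -/
def IsZeroComponent (W : WeightedGraph V) (u : V → ℝ) (Z : Set (MT W)) : Prop :=
  Z.Nonempty ∧ IsPreconnected Z ∧ (∀ p ∈ Z, uext W u p = 0) ∧
    ∀ Z' : Set (MT W), Z ⊆ Z' → IsPreconnected Z' → (∀ p ∈ Z', uext W u p = 0) → Z' = Z

/-- Number of zeros of `ũ` (each maximal zero subgraph counting as one zero). -/
noncomputable def zeroCount (W : WeightedGraph V) (u : V → ℝ) : ℕ :=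
  Nat.card {Z : Set (MT W) // IsZeroComponent W u Z}

/-! For a positive strong sign graph `S`, the set `domainOf W u S` consists of the vertices of
`S` and of the points with `ũ > 0` on edges incident to `S`. Since `ũ` is linear on each edge,
this set is open, `ũ > 0` on it, and it is preconnected because edge segments chain the vertices
of `S` together. The sets `domainOf W u S` for the various positive sign graphs `S` are pairwise
disjoint and cover `{ũ > 0}`, so each of them is a maximal preconnected subset of `{ũ > 0}`, that
is a nodal domain, and every positive nodal domain arises this way. Negative signs reduce to
positive ones through `u ↦ -u`, and `D ↦ vtx W ⁻¹' D` inverts the correspondence. -/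

section SignGraph

variable {α : Type} {G : SimpleGraph α} {u : α → ℝ} {S T : Set α}

theorem IsPosSignGraph.eq_of_mem (hS : IsPosSignGraph G u S) (hT : IsPosSignGraph G u T)
    {x : α} (hxS : x ∈ S) (hxT : x ∈ T) : S = T := by
  have hconn := SimpleGraph.induce_union_connected hS.1.preconnected hT.1.preconnected
    ⟨x, hxS, hxT⟩
  have hpos : ∀ z ∈ S ∪ T, 0 < u z := fun z hz => hz.elim (hS.2.1 z) (hT.2.1 z)
  exact (hS.2.2 _ Set.subset_union_left hconn hpos).symm.trans
    (hT.2.2 _ Set.subset_union_right hconn hpos)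

theorem IsPosSignGraph.mem_of_adj (hS : IsPosSignGraph G u S) {x y : α} (hx : x ∈ S)
    (hxy : G.Adj x y) (hy : 0 < u y) : y ∈ S := by
  have hconn := SimpleGraph.induce_union_connected hS.1.preconnected
    (SimpleGraph.induce_pair_connected_of_adj hxy).preconnected ⟨x, hx, by simp⟩
  have hpos : ∀ z ∈ S ∪ {x, y}, 0 < u z := by
    rintro z (hz | rfl | rfl)
    exacts [hS.2.1 z hz, hS.2.1 z hx, hy]
  rw [← hS.2.2 _ Set.subset_union_left hconn hpos]
  simp

theorem IsPosSignGraph.mem_of_pos_of_adj (hS : IsPosSignGraph G u S) {x y : α}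
    (hxy : G.Adj x y) (h : x ∈ S ∨ y ∈ S) (hx : 0 < u x) : x ∈ S :=
  h.elim id fun hy => hS.mem_of_adj hy hxy.symm hx

theorem exists_isPosSignGraph_mem [Finite α] {x : α} (hx : 0 < u x) :
    ∃ S, IsPosSignGraph G u S ∧ x ∈ S := by
  let F : Set (Set α) := {T | x ∈ T ∧ (G.induce T).Connected ∧ ∀ z ∈ T, 0 < u z}
  have hx_conn : (G.induce {x}).Connected := by
    rw [SimpleGraph.induce_singleton_eq_top]
    exact SimpleGraph.connected_top
  obtain ⟨S, ⟨hxS, hconn, hpos⟩, hmax⟩ := Set.Finite.exists_maximalFor id F (Set.toFinite F)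
    ⟨{x}, rfl, hx_conn, by simpa using hx⟩
  exact ⟨S, ⟨hconn, hpos, fun T hST hT hTpos =>
    (hmax ⟨hST hxS, hT, hTpos⟩ hST).antisymm hST⟩, hxS⟩

theorem IsSignGraph.nonempty (hS : IsSignGraph G u S) : S.Nonempty :=
  Set.nonempty_coe_sort.mp (hS.elim (·.1.nonempty) (·.1.nonempty))

theorem isNegSignGraph_iff_isPosSignGraph_neg :
    IsNegSignGraph G u S ↔ IsPosSignGraph G (-u) S := by
  simp only [IsNegSignGraph, IsPosSignGraph, Pi.neg_apply, neg_pos]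

end SignGraph

theorem add_mul_le_max_of_mem_Icc {c m a b t : ℝ} (hat : a ≤ t) (htb : t ≤ b) :
    c + m * t ≤ max (c + m * a) (c + m * b) := by
  rcases le_total 0 m with hm | hm
  · exact le_max_of_le_right (by nlinarith)
  · exact le_max_of_le_left (by nlinarith)

theorem min_le_add_mul_of_mem_Icc {c m a b t : ℝ} (hat : a ≤ t) (htb : t ≤ b) :
    min (c + m * a) (c + m * b) ≤ c + m * t := by
  rcases le_total 0 m with hm | hm
  · exact min_le_of_left_le (by nlinarith)
  · exact min_le_of_right_le (by nlinarith)

section MetricTree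

variable {W : WeightedGraph V}

abbrev AdjPair (W : WeightedGraph V) : Type := {p : V × V // W.G.Adj p.1 p.2}

theorem elen_pos (e : AdjPair W) : 0 < elen W e.1.1 e.1.2 :=
  one_div_pos.mpr (W.pos _ _ e.2)

-- The point at distance `t` from `e.1.1` on the edge `e`, with `t` clamped to `[0, l(e)]`.
variable (W) in
noncomputable def edgePt (e : AdjPair W) (t : ℝ) : MT W :=
  ⟨descr W (Sum.inl ⟨e, Set.projIcc 0 _ (elen_pos e).le t⟩), _, rfl⟩

theorem isOpen_iff_forall_edgePt {s : Set (MT W)} :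
    IsOpen s ↔ ∀ e : AdjPair W,
      IsOpen ((fun t : Set.Icc 0 (elen W e.1.1 e.1.2) => edgePt W e t) ⁻¹' s) := by
  let _ : TopologicalSpace V := ⊥
  have : DiscreteTopology V := ⟨rfl⟩
  simp only [edgePt, Set.projIcc_val]
  rw [isOpen_coinduced, isOpen_sum_iff, isOpen_sigma_iff]
  simp only [isOpen_discrete, and_true]
  exact Iff.rfl

theorem continuous_edgePt (e : AdjPair W) : Continuous (edgePt W e) := by
  have h : edgePt W e = (fun t : Set.Icc 0 (elen W e.1.1 e.1.2) => edgePt W e t) ∘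
      Set.projIcc 0 _ (elen_pos e).le := by
    ext t
    simp [edgePt]
  rw [h, continuous_def]
  exact fun s hs => (isOpen_iff_forall_edgePt.mp hs e).preimage continuous_projIcc

theorem edgePt_zero (e : AdjPair W) : edgePt W e 0 = vtx W e.1.1 := by
  apply Subtype.ext
  simp [edgePt, descr, vtx]

theorem edgePt_elen (e : AdjPair W) : edgePt W e (elen W e.1.1 e.1.2) = vtx W e.1.2 := by
  apply Subtype.ext
  simp [edgePt, descr, vtx, (elen_pos e).ne']

theorem edgePt_val_of_mem_Ioo (e : AdjPair W) {t : ℝ} (ht : t ∈ Set.Ioo 0 (elen W e.1.1 e.1.2)) :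
    (edgePt W e t).1 = Sum.inr s((e.1.1, t), (e.1.2, elen W e.1.1 e.1.2 - t)) := by
  simp [edgePt, descr, Set.projIcc_of_mem _ (Set.Ioo_subset_Icc_self ht), ht.1.ne', ht.2.ne]

theorem exists_eq_vtx_or_edgePt (p : MT W) :
    (∃ x, p = vtx W x) ∨
      ∃ e : AdjPair W, ∃ t ∈ Set.Icc 0 (elen W e.1.1 e.1.2), p = edgePt W e t := by
  obtain ⟨_, (⟨e, t⟩ | x), rfl⟩ := p
  · exact Or.inr ⟨e, t, t.2, by simp [edgePt]⟩
  · exact Or.inl ⟨x, rfl⟩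

variable (W) in
noncomputable def edgeVal (u : V → ℝ) (e : AdjPair W) (t : ℝ) : ℝ :=
  u e.1.1 + (u e.1.2 - u e.1.1) / elen W e.1.1 e.1.2 * t

theorem edgeVal_zero (u : V → ℝ) (e : AdjPair W) : edgeVal W u e 0 = u e.1.1 := by
  simp [edgeVal]

theorem edgeVal_elen (u : V → ℝ) (e : AdjPair W) :
    edgeVal W u e (elen W e.1.1 e.1.2) = u e.1.2 := by
  simp [edgeVal, (elen_pos e).ne']

theorem edgeVal_le_max (u : V → ℝ) (e : AdjPair W) {t : ℝ}
    (ht : t ∈ Set.Icc 0 (elen W e.1.1 e.1.2)) : edgeVal W u e t ≤ max (u e.1.1) (u e.1.2) := by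
  rw [← edgeVal_zero u e, ← edgeVal_elen u e]
  exact add_mul_le_max_of_mem_Icc ht.1 ht.2

theorem min_le_edgeVal (u : V → ℝ) (e : AdjPair W) {a b t : ℝ} (hat : a ≤ t) (htb : t ≤ b) :
    min (edgeVal W u e a) (edgeVal W u e b) ≤ edgeVal W u e t :=
  min_le_add_mul_of_mem_Icc hat htb

theorem uext_vtx (u : V → ℝ) (x : V) : uext W u (vtx W x) = u x := rfl

theorem uext_edgePt (u : V → ℝ) (e : AdjPair W) {t : ℝ}
    (ht : t ∈ Set.Icc 0 (elen W e.1.1 e.1.2)) : uext W u (edgePt W e t) = edgeVal W u e t := by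
  rcases ht.1.eq_or_lt with rfl | h0
  · rw [edgePt_zero, edgeVal_zero, uext_vtx]
  rcases ht.2.eq_or_lt with rfl | hl
  · rw [edgePt_elen, edgeVal_elen, uext_vtx]
  rw [uext, edgePt_val_of_mem_Ioo e ⟨h0, hl⟩]
  simp only [lineVal, Sym2.lift_mk, edgeVal]
  field_simp [(elen_pos e).ne']
  ring

end MetricTree

section Domain

variable {W : WeightedGraph V} {u : V → ℝ} {S S' : Set V}

variable (W) in
def domainOf (u : V → ℝ) (S : Set V) : Set (MT W) :=
  {p | match p.1 with
    | Sum.inl x => x ∈ S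
    | Sum.inr s => 0 < lineVal u (Sum.inr s) ∧ ∃ a ∈ s, a.1 ∈ S}

theorem vtx_mem_domainOf {x : V} : vtx W x ∈ domainOf W u S ↔ x ∈ S := Iff.rfl

theorem mem_domainOf_edgePt (hS : IsPosSignGraph W.G u S) (e : AdjPair W) {t : ℝ}
    (ht : t ∈ Set.Icc 0 (elen W e.1.1 e.1.2)) :
    edgePt W e t ∈ domainOf W u S ↔ 0 < edgeVal W u e t ∧ (e.1.1 ∈ S ∨ e.1.2 ∈ S) := by
  rcases ht.1.eq_or_lt with rfl | h0
  · rw [edgePt_zero, edgeVal_zero, vtx_mem_domainOf]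
    exact ⟨fun hx => ⟨hS.2.1 _ hx, Or.inl hx⟩,
      fun ⟨hpos, h⟩ => hS.mem_of_pos_of_adj e.2 h hpos⟩
  rcases ht.2.eq_or_lt with rfl | hl
  · rw [edgePt_elen, edgeVal_elen, vtx_mem_domainOf]
    exact ⟨fun hy => ⟨hS.2.1 _ hy, Or.inr hy⟩,
      fun ⟨hpos, h⟩ => hS.mem_of_pos_of_adj e.2.symm h.symm hpos⟩
  rw [← uext_edgePt u e ht]
  simp [domainOf, uext, edgePt_val_of_mem_Ioo e ⟨h0, hl⟩, Sym2.mem_iff, or_and_right, exists_or]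

theorem pos_of_mem_domainOf (hS : IsPosSignGraph W.G u S) {p : MT W}
    (hp : p ∈ domainOf W u S) : 0 < uext W u p := by
  rcases exists_eq_vtx_or_edgePt p with ⟨x, rfl⟩ | ⟨e, t, ht, rfl⟩
  · exact hS.2.1 x hp
  · rw [uext_edgePt u e ht]
    exact ((mem_domainOf_edgePt hS e ht).mp hp).1

theorem isOpen_domainOf (hS : IsPosSignGraph W.G u S) : IsOpen (domainOf W u S) := by
  refine isOpen_iff_forall_edgePt.mpr fun e => ?_
  have h : (fun t : Set.Icc 0 (elen W e.1.1 e.1.2) => edgePt W e t) ⁻¹' domainOf W u S =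
      {t : Set.Icc 0 (elen W e.1.1 e.1.2) | 0 < edgeVal W u e t ∧ (e.1.1 ∈ S ∨ e.1.2 ∈ S)} := by
    ext t
    exact mem_domainOf_edgePt hS e t.2
  rw [h]
  by_cases htouch : e.1.1 ∈ S ∨ e.1.2 ∈ S
  · simp only [htouch, and_true]
    exact isOpen_lt continuous_const (by unfold edgeVal; fun_prop)
  · simp [htouch]

theorem exists_mem_domainOf {p : MT W} (hp : 0 < uext W u p) :
    ∃ S, IsPosSignGraph W.G u S ∧ p ∈ domainOf W u S := by
  rcases exists_eq_vtx_or_edgePt p with ⟨x, rfl⟩ | ⟨e, t, ht, rfl⟩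
  · exact exists_isPosSignGraph_mem hp
  rw [uext_edgePt u e ht] at hp
  rcases lt_max_iff.mp (hp.trans_le (edgeVal_le_max u e ht)) with hx | hy
  · obtain ⟨S, hS, hxS⟩ := exists_isPosSignGraph_mem hx
    exact ⟨S, hS, (mem_domainOf_edgePt hS e ht).mpr ⟨hp, Or.inl hxS⟩⟩
  · obtain ⟨S, hS, hyS⟩ := exists_isPosSignGraph_mem hy
    exact ⟨S, hS, (mem_domainOf_edgePt hS e ht).mpr ⟨hp, Or.inr hyS⟩⟩

theorem eq_of_mem_domainOf (hS : IsPosSignGraph W.G u S) (hS' : IsPosSignGraph W.G u S')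
    {p : MT W} (hp : p ∈ domainOf W u S) (hp' : p ∈ domainOf W u S') : S = S' := by
  rcases exists_eq_vtx_or_edgePt p with ⟨x, rfl⟩ | ⟨e, t, ht, rfl⟩
  · exact hS.eq_of_mem hS' hp hp'
  have htouch := ((mem_domainOf_edgePt hS e ht).mp hp).2
  rcases ((mem_domainOf_edgePt hS' e ht).mp hp').2 with hx | hy
  · exact hS.eq_of_mem hS' (hS.mem_of_pos_of_adj e.2 htouch (hS'.2.1 _ hx)) hx
  · exact hS.eq_of_mem hS' (hS.mem_of_pos_of_adj e.2.symm htouch.symm (hS'.2.1 _ hy)) hy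

theorem image_edgePt_subset_domainOf (hS : IsPosSignGraph W.G u S) (e : AdjPair W)
    (htouch : e.1.1 ∈ S ∨ e.1.2 ∈ S) {a b : ℝ} (ha : 0 ≤ a) (hb : b ≤ elen W e.1.1 e.1.2)
    (hua : 0 < edgeVal W u e a) (hub : 0 < edgeVal W u e b) :
    edgePt W e '' Set.Icc a b ⊆ domainOf W u S := by
  rintro _ ⟨t, ht, rfl⟩
  refine (mem_domainOf_edgePt hS e ⟨ha.trans ht.1, ht.2.trans hb⟩).mpr ⟨?_, htouch⟩
  exact (lt_min hua hub).trans_le (min_le_edgeVal u e ht.1 ht.2)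

theorem image_edgePt_subset_connectedComponentIn (hS : IsPosSignGraph W.G u S) (e : AdjPair W)
    (htouch : e.1.1 ∈ S ∨ e.1.2 ∈ S) {a b : ℝ} (ha : 0 ≤ a) (hb : b ≤ elen W e.1.1 e.1.2)
    (hua : 0 < edgeVal W u e a) (hub : 0 < edgeVal W u e b) {q : MT W}
    (hq : q ∈ edgePt W e '' Set.Icc a b) :
    edgePt W e '' Set.Icc a b ⊆ connectedComponentIn (domainOf W u S) q :=
  (isPreconnected_Icc.image _ (continuous_edgePt e).continuousOn).subset_connectedComponentIn hq
    (image_edgePt_subset_domainOf hS e htouch ha hb hua hub)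

theorem connectedComponentIn_domainOf_vtx_eq (hS : IsPosSignGraph W.G u S) {x y : V}
    (hx : x ∈ S) (hy : y ∈ S) :
    connectedComponentIn (domainOf W u S) (vtx W x) =
      connectedComponentIn (domainOf W u S) (vtx W y) := by
  have hadj : ∀ e : AdjPair W, e.1.1 ∈ S → e.1.2 ∈ S →
      connectedComponentIn (domainOf W u S) (vtx W e.1.1) =
        connectedComponentIn (domainOf W u S) (vtx W e.1.2) := fun e he₁ he₂ =>
    connectedComponentIn_eq <| image_edgePt_subset_connectedComponentIn hS e (Or.inl he₁)
      le_rfl le_rfl (by rw [edgeVal_zero]; exact hS.2.1 _ he₁)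
      (by rw [edgeVal_elen]; exact hS.2.1 _ he₂) ⟨0, ⟨le_rfl, (elen_pos e).le⟩, edgePt_zero e⟩
      ⟨_, ⟨(elen_pos e).le, le_rfl⟩, edgePt_elen e⟩
  suffices h : ∀ a b : S, (W.G.induce S).Reachable a b →
      connectedComponentIn (domainOf W u S) (vtx W a) =
        connectedComponentIn (domainOf W u S) (vtx W b) from
    h ⟨x, hx⟩ ⟨y, hy⟩ (hS.1.preconnected _ _)
  rintro a b ⟨w⟩
  induction w with
  | nil => rfl
  | @cons a c _ h _ ih => exact (hadj ⟨(a, c), h⟩ a.2 c.2).trans ih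

theorem exists_mem_connectedComponentIn_domainOf (hS : IsPosSignGraph W.G u S) {p : MT W}
    (hp : p ∈ domainOf W u S) :
    ∃ x ∈ S, p ∈ connectedComponentIn (domainOf W u S) (vtx W x) := by
  rcases exists_eq_vtx_or_edgePt p with ⟨x, rfl⟩ | ⟨e, t, ht, rfl⟩
  · exact ⟨x, hp, mem_connectedComponentIn hp⟩
  obtain ⟨hut, htouch⟩ := (mem_domainOf_edgePt hS e ht).mp hp
  rcases htouch with hx | hy
  · exact ⟨_, hx, image_edgePt_subset_connectedComponentIn hS e (Or.inl hx) le_rfl ht.2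
      (by rw [edgeVal_zero]; exact hS.2.1 _ hx) hut ⟨0, ⟨le_rfl, ht.1⟩, edgePt_zero e⟩
      ⟨t, ⟨ht.1, le_rfl⟩, rfl⟩⟩
  · exact ⟨_, hy, image_edgePt_subset_connectedComponentIn hS e (Or.inr hy) ht.1 le_rfl
      hut (by rw [edgeVal_elen]; exact hS.2.1 _ hy) ⟨_, ⟨ht.2, le_rfl⟩, edgePt_elen e⟩
      ⟨t, ⟨le_rfl, ht.2⟩, rfl⟩⟩

theorem isPreconnected_domainOf (hS : IsPosSignGraph W.G u S) :
    IsPreconnected (domainOf W u S) := by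
  obtain ⟨x, hx⟩ := IsSignGraph.nonempty (Or.inl hS)
  have hsub : domainOf W u S ⊆ connectedComponentIn (domainOf W u S) (vtx W x) := by
    intro p hp
    obtain ⟨y, hy, hpy⟩ := exists_mem_connectedComponentIn_domainOf hS hp
    rwa [connectedComponentIn_domainOf_vtx_eq hS hx hy]
  rw [← (connectedComponentIn_subset _ _).antisymm hsub]
  exact isPreconnected_connectedComponentIn

theorem isNodalDomain_domainOf (hS : IsPosSignGraph W.G u S) :
    IsNodalDomain W u (domainOf W u S) := by
  obtain ⟨x, hx⟩ := IsSignGraph.nonempty (Or.inl hS)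
  refine ⟨⟨vtx W x, hx⟩, isPreconnected_domainOf hS,
    Or.inl fun p => pos_of_mem_domainOf hS, fun D hsub hD hsign => ?_⟩
  have hpos : ∀ p ∈ D, 0 < uext W u p :=
    hsign.resolve_right fun hneg => (hneg (vtx W x) (hsub hx)).not_gt (hS.2.1 x hx)
  let others := ⋃ T : {T // IsPosSignGraph W.G u T ∧ T ≠ S}, domainOf W u T.1
  have hdisj : Disjoint (domainOf W u S) others := by
    refine Set.disjoint_left.mpr fun p hp hp' => ?_
    obtain ⟨T, hpT⟩ := Set.mem_iUnion.mp hp'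
    exact T.2.2 (eq_of_mem_domainOf T.2.1 hS hpT hp)
  have hcover : D ⊆ domainOf W u S ∪ others := by
    intro p hp
    obtain ⟨T, hT, hpT⟩ := exists_mem_domainOf (hpos p hp)
    by_cases hTS : T = S
    · exact Or.inl (hTS ▸ hpT)
    · exact Or.inr (Set.mem_iUnion.mpr ⟨⟨T, hT, hTS⟩, hpT⟩)
  have hopen : IsOpen others := isOpen_iUnion fun T => isOpen_domainOf T.2.1
  exact (hD.subset_left_of_subset_union (isOpen_domainOf hS) hopen hdisj hcover
    ⟨vtx W x, hsub hx, hx⟩).antisymm hsub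

end Domain

section NodalDomain

variable {W : WeightedGraph V} {u : V → ℝ} {D D' : Set (MT W)} {S : Set V}

theorem IsNodalDomain.eq_of_mem (hD : IsNodalDomain W u D) (hD' : IsNodalDomain W u D')
    {p : MT W} (hp : p ∈ D) (hp' : p ∈ D') : D = D' := by
  have hsign : (∀ q ∈ D ∪ D', 0 < uext W u q) ∨ (∀ q ∈ D ∪ D', uext W u q < 0) := by
    rcases hD.2.2.1 with h | h <;> rcases hD'.2.2.1 with h' | h'
    · exact Or.inl fun q hq => hq.elim (h q) (h' q)
    · exact absurd (h' p hp') (h p hp).not_gt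
    · exact absurd (h p hp) (h' p hp').not_gt
    · exact Or.inr fun q hq => hq.elim (h q) (h' q)
  have hconn := hD.2.1.union p hp hp' hD'.2.1
  exact (hD.2.2.2 _ Set.subset_union_left hconn hsign).symm.trans
    (hD'.2.2.2 _ Set.subset_union_right hconn hsign)

theorem IsNodalDomain.exists_eq_domainOf (hD : IsNodalDomain W u D)
    (hpos : ∀ p ∈ D, 0 < uext W u p) : ∃ S, IsPosSignGraph W.G u S ∧ D = domainOf W u S := by
  obtain ⟨p, hp⟩ := hD.1
  obtain ⟨S, hS, hpS⟩ := exists_mem_domainOf (hpos p hp)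
  exact ⟨S, hS, hD.eq_of_mem (isNodalDomain_domainOf hS) hp hpS⟩

theorem uext_neg (u : V → ℝ) (p : MT W) : uext W (-u) p = -uext W u p := by
  obtain ⟨_ | s, _⟩ := p
  · rfl
  · induction s using Sym2.ind
    simp only [uext, lineVal, Sym2.lift_mk, Pi.neg_apply]
    ring

theorem isNodalDomain_neg_iff : IsNodalDomain W (-u) D ↔ IsNodalDomain W u D := by
  simp only [IsNodalDomain, uext_neg, neg_pos, neg_lt_zero, or_comm]

theorem IsSignGraph.exists_isNodalDomain_preimage_vtx_eq (hS : IsSignGraph W.G u S) :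
    ∃ D, IsNodalDomain W u D ∧ vtx W ⁻¹' D = S := by
  rcases hS with hS | hS
  · exact ⟨_, isNodalDomain_domainOf hS, rfl⟩
  · exact ⟨_, isNodalDomain_neg_iff.mp
      (isNodalDomain_domainOf (isNegSignGraph_iff_isPosSignGraph_neg.mp hS)), rfl⟩

theorem IsNodalDomain.isSignGraph_preimage_vtx (hD : IsNodalDomain W u D) :
    IsSignGraph W.G u (vtx W ⁻¹' D) := by
  rcases hD.2.2.1 with hpos | hneg
  · obtain ⟨S, hS, rfl⟩ := hD.exists_eq_domainOf hpos
    exact Or.inl hS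
  · obtain ⟨S, hS, rfl⟩ := (isNodalDomain_neg_iff.mpr hD).exists_eq_domainOf fun p hp => by
      rw [uext_neg]
      exact neg_pos.mpr (hneg p hp)
    exact Or.inr (isNegSignGraph_iff_isPosSignGraph_neg.mpr hS)

theorem IsSignGraph.existsUnique_isNodalDomain (hS : IsSignGraph W.G u S) :
    ∃! D, IsNodalDomain W u D ∧ ∀ x ∈ S, vtx W x ∈ D := by
  obtain ⟨D, hD, hDS⟩ := hS.exists_isNodalDomain_preimage_vtx_eq
  obtain ⟨x, hx⟩ := hS.nonempty
  refine ⟨D, ⟨hD, fun y hy => hDS.ge hy⟩, fun D' ⟨hD', hSD'⟩ => ?_⟩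
  exact hD'.eq_of_mem hD (hSD' x hx) (hDS.ge hx)

end NodalDomain

theorem signGraphCount_eq_nodalCount (W : WeightedGraph V) (u : V → ℝ) :
    signGraphCount W.G u = nodalCount W u := by
  let vertices : {D // IsNodalDomain W u D} → {S // IsSignGraph W.G u S} :=
    fun D => ⟨vtx W ⁻¹' D.1, D.2.isSignGraph_preimage_vtx⟩
  refine (Nat.card_congr (Equiv.ofBijective vertices ⟨fun D D' h => ?_, fun S => ?_⟩)).symm
  · obtain ⟨x, hx⟩ := D.2.isSignGraph_preimage_vtx.nonempty
    have hx' : x ∈ vtx W ⁻¹' D'.1 := (Set.ext_iff.mp (congrArg Subtype.val h) x).mp hx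
    exact Subtype.ext (D.2.eq_of_mem D'.2 hx hx')
  · obtain ⟨D, hD, hDS⟩ := S.2.exists_isNodalDomain_preimage_vtx_eq
    exact ⟨⟨D, hD⟩, Subtype.ext hDS⟩

theorem sign_graphs_eq_nodal_domains_general (W : WeightedGraph V)
    (u : V → ℝ) :
    signGraphCount W.G u = nodalCount W u ∧
      ∀ S : Set V, IsSignGraph W.G u S →
        ∃! D : Set (MT W), IsNodalDomain W u D ∧ ∀ x ∈ S, vtx W x ∈ D :=
  ⟨signGraphCount_eq_nodalCount W u, fun _ hS => hS.existsUnique_isNodalDomain⟩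

/-- a function `u` on a finite weighted tree has exactly `n` strong sign
graphs iff its piecewise-linear extension `ũ` has exactly `n` nodal domains, the
correspondence sending each strong sign graph to the unique nodal domain containing it. -/
theorem sign_graphs_eq_nodal_domains (W : WeightedGraph V) (hT : W.G.IsTree)
    (u : V → ℝ) :
    signGraphCount W.G u = nodalCount W u ∧
      ∀ S : Set V, IsSignGraph W.G u S →
        ∃! D : Set (MT W), IsNodalDomain W u D ∧ ∀ x ∈ S, vtx W x ∈ D :=
  sign_graphs_eq_nodal_domains_general W u
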